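/- arXiv:1305.4063 — 2 statements merged into one kernel-verified Lean document; each statement's English description precedes it below -/
import Mathlib

section
/- Let A be an n×n matrix over a field with A^t = 0 and rank(A) = n(t-1)/t (the maximum possible). Then rank(A^{t-1}) = n/t; in particular A^{t-1} ≠ 0 when n > 0. -/
open LinearMap Module

/-- Sylvester's rank inequality for square matrices over a field. -/
lemma sylvester_rank_ineq {F : Type*} [Field F] {m : ℕ}
    (A B : Matrix (Fin m) (Fin m) F) :
    A.rank + B.rank ≤ m + (A * B).rank := by
  classical
  set f := A.mulVecLin with hf
  set g := B.mulVecLin with hg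
  set h := f.domRestrict (LinearMap.range g) with hh
  have hAB : (A * B).rank = finrank F ((LinearMap.range g).map f) := by
    rw [Matrix.rank, Matrix.mulVecLin_mul, LinearMap.range_comp]
  have rn1 : finrank F (LinearMap.range h) + finrank F (LinearMap.ker h)
      = B.rank := by
    rw [Matrix.rank]
    exact LinearMap.finrank_range_add_finrank_ker h
  have hrange : LinearMap.range h = (LinearMap.range g).map f :=
    LinearMap.range_domRestrict _ _
  have hkerle : finrank F (LinearMap.ker h) ≤ finrank F (LinearMap.ker f) := by
    rw [← Submodule.finrank_map_subtype_eq (LinearMap.range g) (LinearMap.ker h)]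
    apply Submodule.finrank_mono
    rintro x ⟨y, hy, rfl⟩
    have : f y.val = 0 := by
      simpa [hh, LinearMap.mem_ker] using hy
    simpa [LinearMap.mem_ker] using this
  have rn2 : A.rank + finrank F (LinearMap.ker f) = m := by
    rw [Matrix.rank]
    have := LinearMap.finrank_range_add_finrank_ker f
    simpa using this
  calc A.rank + B.rank
      = A.rank + (finrank F (LinearMap.range h) + finrank F (LinearMap.ker h)) := by
        rw [rn1]
    _ ≤ A.rank + ((A * B).rank + finrank F (LinearMap.ker f)) := by
        rw [hAB, ← hrange]; omega
    _ = m + (A * B).rank := by omega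

/-- If `A` is an `n × n` matrix over a field with `A ^ t = 0` and
`rank A = n * (t - 1) / t` (the maximum possible; `t ∣ n`), then
`rank (A ^ (t - 1)) = n / t`; in particular `A ^ (t - 1) ≠ 0` when `n > 0`. -/
theorem stmt_2 {F : Type*} [Field F] {n t : ℕ} (ht : 0 < t) (hdvd : t ∣ n)
    (A : Matrix (Fin n) (Fin n) F) (hA : A ^ t = 0)
    (hrank : t * A.rank = n * (t - 1)) :
    t * (A ^ (t - 1)).rank = n ∧ (0 < n → A ^ (t - 1) ≠ 0) := by
  classical
  -- lower bound chain: for k ≥ 1, k * A.rank ≤ (A^k).rank + (k-1) * n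
  have chain : ∀ k : ℕ, (k + 1) * A.rank ≤ (A ^ (k + 1)).rank + k * n := by
    intro k
    induction k with
    | zero => simp
    | succ k ih =>
      have syl := sylvester_rank_ineq A (A ^ (k + 1))
      rw [← pow_succ'] at syl
      calc (k + 1 + 1) * A.rank = (k + 1) * A.rank + A.rank := by ring
        _ ≤ (A ^ (k + 1)).rank + k * n + A.rank := Nat.add_le_add_right ih _
        _ = A.rank + (A ^ (k + 1)).rank + k * n := by ring
        _ ≤ n + (A ^ (k + 1 + 1)).rank + k * n := Nat.add_le_add_right syl _
        _ = (A ^ (k + 1 + 1)).rank + (k + 1) * n := by ring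
  obtain ⟨s, rfl⟩ : ∃ s, t = s + 1 := ⟨t - 1, by omega⟩
  simp only [Nat.add_sub_cancel] at *
  have key : (s + 1) * (A ^ s).rank = n := by
    rcases Nat.eq_zero_or_pos s with rfl | hs
    · simp [Matrix.rank_one]
    · obtain ⟨s1, rfl⟩ : ∃ s1, s = s1 + 1 := ⟨s - 1, by omega⟩
      have hc := chain s1
      have hmul : A * A ^ (s1 + 1) = 0 := by
        rw [← pow_succ']; exact hA
      have u := Matrix.rank_add_rank_le_card_of_mul_eq_zero hmul
      rw [Fintype.card_fin] at u
      set a := A.rank with ha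
      set r := (A ^ (s1 + 1)).rank with hr
      have h1 : (s1 + 1 + 1) * r ≤ n := by
        nlinarith [Nat.mul_le_mul_left (s1 + 1 + 1) u, hrank]
      have h2 : n ≤ (s1 + 1 + 1) * r := by
        nlinarith [Nat.mul_le_mul_left (s1 + 1 + 1) hc, hrank]
      omega
  refine ⟨key, fun hn hzero => ?_⟩
  rw [hzero, Matrix.rank_zero] at key
  omega
end

section
/- Let Ĝ be an n×n circulant matrix over a field of rank r, let G consist of the first r rows of Ĝ, and let x = x₁G for a 1×r vector x₁. Then the circulant completion X of x (the circulant matrix with first row x) has rank at most r. -/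
/-- Let `Ĝ` be an `n × n` circulant matrix over a field of rank `r`, let `G`
consist of the first `r` rows of `Ĝ`, and let `x = x₁ G` for a `1 × r` vector
`x₁`.  Then the circulant completion `X` of `x` (the circulant matrix with
first row `x`) has rank at most `r`. -/
theorem stmt_17 {F : Type*} [Field F] {n r : ℕ} [NeZero n] (hr : r ≤ n)
    (v : Fin n → F)
    (Ghat : Matrix (Fin n) (Fin n) F)
    (hGhat : Ghat = Matrix.of fun i j => v (j - i))
    (hrank : Ghat.rank = r)
    (G : Matrix (Fin r) (Fin n) F)
    (hG : G = Matrix.of fun (i : Fin r) (j : Fin n) => Ghat (Fin.castLE hr i) j)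
    (x₁ : Fin r → F) :
    (Matrix.of fun i j => (Matrix.vecMul x₁ G) (j - i) : Matrix (Fin n) (Fin n) F).rank
      ≤ r := by
  subst hG
  set y : Fin n → F := fun m => if h : (m : ℕ) < r then x₁ ⟨m, h⟩ else 0 with hy
  set P : Matrix (Fin n) (Fin n) F := Matrix.of fun i m => y (m - i) with hP
  have key : (Matrix.of fun i j => (Matrix.vecMul x₁
      (Matrix.of fun (i : Fin r) (j : Fin n) => Ghat (Fin.castLE hr i) j)) (j - i)
      : Matrix (Fin n) (Fin n) F) = P * Ghat := by
    subst hGhat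
    ext i j
    simp only [Matrix.mul_apply, Matrix.vecMul, dotProduct, Matrix.of_apply, hP]
    have reind : ∑ m : Fin n, y (m - i) * v (j - m)
        = ∑ m : Fin n, y m * v (j - i - m) := by
      refine Fintype.sum_bijective (fun m => m - i) (Equiv.subRight i).bijective _ _ ?_
      intro m
      congr 1
      congr 1
      rw [sub_sub_sub_cancel_right]
    rw [reind]
    refine Fintype.sum_of_injective (Fin.castLE hr) (Fin.castLE_injective hr) _ _ ?_ ?_
    · intro m hm
      have : ¬ (m : ℕ) < r := by
        intro h
        exact hm ⟨⟨m, h⟩, by ext; simp⟩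
      simp [hy, this]
    · intro k
      have : ((Fin.castLE hr k : Fin n) : ℕ) < r := k.isLt
      simp [hy, this]
  rw [key]
  calc (P * Ghat).rank ≤ Ghat.rank := Matrix.rank_mul_le_right P Ghat
    _ = r := hrank
end
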